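/- arXiv:2106.07882 — 6 statements merged into one kernel-verified Lean document; each statement's English description precedes it below -/
import Mathlib

section
/- For every natural number m with m ≥ 2, the sum over j from 1 to m−1 of 1/sin²(πj/m) equals (m² − 1)/3. -/
/-!
For `ω = e^{2ix}` one has `(ω - 1)² = -4ω sin² x`, and for every nontrivial `m`-th root of unity
`ω`, summing by parts twice gives `(ω - 1)² P(ω) = 2mω` with `P(ω) = ∑_{k<m} k(m-k) ωᵏ`.
Hence `csc²(πj/m) = -(2/m) P(ζʲ)` for `ζ = e^{2πi/m}` and `0 < j < m`. Summing `P(ζʲ)` over all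
`j < m` picks out the constant coefficient of `P`, which is `0`, so the sum over `0 < j < m` is
`-P(1)`, and the identity follows from `∑_{k<m} k(m-k) = m(m² - 1)/6`.
-/

open Real Finset

section GeometricWeights

variable {R : Type*} [CommRing R]

theorem sub_one_mul_sum_range_mul_pow (f : ℕ → R) (ω : R) (n : ℕ) :
    (ω - 1) * ∑ k ∈ range n, f k * ω ^ k
      = f n * ω ^ n - f 0 - ω * ∑ k ∈ range n, (f (k + 1) - f k) * ω ^ k := by
  induction n with
  | zero => simp
  | succ n ih =>
    rw [sum_range_succ, sum_range_succ, mul_add, ih, pow_succ]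
    ring

theorem sub_one_sq_mul_sum_range_mul_sub_mul_pow {ω : R} {m : ℕ}
    (hω : ∑ k ∈ range m, ω ^ k = 0) :
    (ω - 1) ^ 2 * ∑ k ∈ range m, (k : R) * (m - k) * ω ^ k = 2 * m * ω := by
  have hpow : ω ^ m = 1 := by
    linear_combination (mul_geom_sum ω m).symm + (ω - 1) * hω
  have h₁ := sub_one_mul_sum_range_mul_pow (fun k => (k : R) * (m - k)) ω m
  have h₂ := sub_one_mul_sum_range_mul_pow (fun k => (m : R) - 2 * k - 1) ω m
  have hdiff₁ : ∀ k ∈ range m,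
      (((k + 1 : ℕ) : R) * (m - (k + 1 : ℕ)) - k * (m - k)) * ω ^ k = (m - 2 * k - 1) * ω ^ k :=
    fun k _ => by push_cast; ring
  have hdiff₂ : ∀ k ∈ range m,
      ((m : R) - 2 * (k + 1 : ℕ) - 1 - (m - 2 * k - 1)) * ω ^ k = -2 * ω ^ k :=
    fun k _ => by push_cast; ring
  simp only [sum_congr rfl hdiff₁, sum_congr rfl hdiff₂, ← mul_sum, hω, hpow] at h₁ h₂
  push_cast at h₁ h₂
  linear_combination (ω - 1) * h₁ - ω * h₂

theorem six_mul_sum_range_mul_sub (a : R) (n : ℕ) :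
    6 * ∑ k ∈ range n, (k : R) * (a - k) = n * (n - 1) * (3 * a - 2 * n + 1) := by
  induction n with
  | zero => simp
  | succ n ih =>
    rw [sum_range_succ, mul_add, ih]
    push_cast
    ring

end GeometricWeights

namespace IsPrimitiveRoot

variable {R : Type*} [CommRing R] [IsDomain R] {ζ : R} {m : ℕ}

theorem geom_sum_pow_eq_zero (hζ : IsPrimitiveRoot ζ m) {k : ℕ} (hk : ¬ m ∣ k) :
    ∑ j ∈ range m, (ζ ^ k) ^ j = 0 := by
  have hne : ζ ^ k - 1 ≠ 0 := sub_ne_zero.2 ((hζ.pow_eq_one_iff_dvd k).not.2 hk)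
  refine eq_zero_of_ne_zero_of_mul_left_eq_zero hne ?_
  rw [mul_geom_sum, ← pow_mul, mul_comm, pow_mul, hζ.pow_eq_one, one_pow, sub_self]

theorem sum_range_sum_range_mul_pow_pow (hζ : IsPrimitiveRoot ζ m) (f : ℕ → R) :
    ∑ j ∈ range m, ∑ k ∈ range m, f k * (ζ ^ j) ^ k = m * f 0 := by
  rcases Nat.eq_zero_or_pos m with rfl | hm
  · simp
  rw [sum_comm, sum_eq_single_of_mem 0 (mem_range.2 hm)]
  · simp [mul_comm]
  · intro k hk hk0
    simp_rw [← pow_mul, mul_comm _ k, pow_mul, ← mul_sum]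
    have hk : ¬ m ∣ k := Nat.not_dvd_of_pos_of_lt (Nat.pos_of_ne_zero hk0) (mem_range.1 hk)
    rw [hζ.geom_sum_pow_eq_zero hk, mul_zero]

end IsPrimitiveRoot

namespace Complex

theorem exp_two_mul_mul_I_sub_one (x : ℂ) :
    exp (2 * x * I) - 1 = 2 * I * sin x * exp (x * I) := by
  have h : exp (-x * I) * exp (x * I) = 1 := by rw [← exp_add]; simp
  rw [sin, show 2 * x * I = x * I + x * I by ring, exp_add]
  linear_combination h + (exp (x * I) ^ 2 - exp (-x * I) * exp (x * I)) * I_sq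

theorem sin_sq_mul_sum_range_mul_sub_mul_exp_pow {x : ℂ} {m : ℕ}
    (h : ∑ k ∈ range m, exp (2 * x * I) ^ k = 0) :
    sin x ^ 2 * ∑ k ∈ range m, (k : ℂ) * (m - k) * exp (2 * x * I) ^ k = -m / 2 := by
  have hsq : (exp (2 * x * I) - 1) ^ 2 = -4 * exp (2 * x * I) * sin x ^ 2 := by
    have hexp : exp (2 * x * I) = exp (x * I) ^ 2 := by rw [← exp_nat_mul]; ring_nf
    rw [exp_two_mul_mul_I_sub_one, hexp]
    linear_combination 4 * sin x ^ 2 * exp (x * I) ^ 2 * I_sq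
  have hP := sub_one_sq_mul_sum_range_mul_sub_mul_pow h
  rw [hsq] at hP
  refine mul_left_cancel₀ (exp_ne_zero (2 * x * I)) ?_
  linear_combination (-1 / 4 : ℂ) * hP

end Complex

/-- Lemma 3.4 (first identity): for every integer `m ≥ 2`,
`∑_{j=1}^{m-1} 1 / sin²(πj/m) = (m² − 1)/3`. -/
theorem sum_csc_sq (m : ℕ) (hm : 2 ≤ m) :
    ∑ j ∈ Finset.Icc 1 (m - 1), 1 / (Real.sin (π * j / m)) ^ 2
      = ((m : ℝ) ^ 2 - 1) / 3 := by
  apply Complex.ofReal_injective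
  push_cast
  have hm0 : (m : ℂ) ≠ 0 := by exact_mod_cast (by omega : m ≠ 0)
  obtain ⟨ζ, hζ, hζexp⟩ : ∃ ζ : ℂ, IsPrimitiveRoot ζ m ∧
      ∀ j : ℕ, ζ ^ j = Complex.exp (2 * (π * j / m) * Complex.I) :=
    ⟨_, Complex.isPrimitiveRoot_exp m (by omega), fun j => by rw [← Complex.exp_nat_mul]; ring_nf⟩
  have hcsc : ∀ j ∈ Ico 1 m, 1 / Complex.sin (π * j / m) ^ 2
      = -2 / m * ∑ k ∈ range m, (k : ℂ) * (m - k) * (ζ ^ j) ^ k := by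
    intro j hj
    obtain ⟨hj0, hjm⟩ := mem_Ico.1 hj
    have h := Complex.sin_sq_mul_sum_range_mul_sub_mul_exp_pow (x := π * j / m) (m := m)
      (by rw [← hζexp]; exact hζ.geom_sum_pow_eq_zero (Nat.not_dvd_of_pos_of_lt hj0 hjm))
    rw [← hζexp] at h
    have hsin : Complex.sin (π * j / m) ≠ 0 := fun h0 => hm0 <| by
      rw [h0] at h
      linear_combination 2 * h
    field_simp
    linear_combination 2 * h
  rw [Icc_sub_one_right_eq_Ico_of_not_isMin (not_isMin_iff.2 ⟨0, by omega⟩),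
    sum_congr rfl hcsc, ← mul_sum, sum_Ico_eq_sub _ (by omega), sum_range_one,
    hζ.sum_range_sum_range_mul_pow_pow (fun k => (k : ℂ) * (m - k))]
  simp only [pow_zero, one_pow, mul_one, Nat.cast_zero, zero_mul, mul_zero, zero_sub]
  field_simp
  linear_combination six_mul_sum_range_mul_sub (m : ℂ) m
end

section
/- For every natural number m with m ≥ 2, the sum over j from 1 to m−1 of cos(2πj/m)/sin²(πj/m) equals (m² − 6m + 5)/3. -/
/-!
With `ζ = exp (2iθ)` one has `(ζ - 1)² = -4 sin²θ · ζ`, and for an `n`-th root of unity `ζ ≠ 1`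
the closed forms of `∑ k ζᵏ` and `∑ k² ζᵏ` give `(ζ - 1)² ∑_{k<n} k (n - k) ζᵏ = 2 n ζ`.
Taking real parts, `csc²θ = -(2/n) ∑_{k<n} k (n - k) cos 2kθ` whenever `sin nθ = 0 ≠ sin θ`.
Summing over `θ = πj/m` and using `∑_{j=1}^{m-1} cos (2πjk/m) = -1` for `0 < k < m` yields
`∑ csc² (πj/m) = (2/m) ∑_{k<m} k (m - k) = (m² - 1)/3`, and `cos 2θ / sin²θ = csc²θ - 2`.
-/

open Real Finset

section ArithmeticGeometricSums

variable {R : Type*} [CommRing R]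

theorem sub_one_sq_mul_sum_range_natCast_mul_pow (x : R) (n : ℕ) :
    (x - 1) ^ 2 * ∑ k ∈ range n, (k : R) * x ^ k = (n - 1) * x ^ (n + 1) - n * x ^ n + x := by
  induction n with
  | zero => simp
  | succ n ih => rw [sum_range_succ, mul_add, ih]; push_cast; ring

theorem sub_one_pow_three_mul_sum_range_natCast_sq_mul_pow (x : R) (n : ℕ) :
    (x - 1) ^ 3 * ∑ k ∈ range n, (k : R) ^ 2 * x ^ k
      = (n - 1) ^ 2 * x ^ (n + 2) + (-2 * n ^ 2 + 2 * n + 1) * x ^ (n + 1) + n ^ 2 * x ^ n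
        - x ^ 2 - x := by
  induction n with
  | zero => simp
  | succ n ih => rw [sum_range_succ, mul_add, ih]; push_cast; ring

theorem sub_one_sq_mul_sum_range_mul_sub_mul_pow_of_pow_eq_one [IsDomain R] {x : R} {n : ℕ}
    (hxn : x ^ n = 1) (hx : x ≠ 1) :
    (x - 1) ^ 2 * ∑ k ∈ range n, (k : R) * (n - k) * x ^ k = 2 * n * x := by
  have h₁ := sub_one_sq_mul_sum_range_natCast_mul_pow x n
  have h₂ := sub_one_pow_three_mul_sum_range_natCast_sq_mul_pow x n
  simp only [pow_add, hxn, one_mul] at h₁ h₂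
  have hsplit : ∑ k ∈ range n, (k : R) * (n - k) * x ^ k
      = n * ∑ k ∈ range n, (k : R) * x ^ k - ∑ k ∈ range n, (k : R) ^ 2 * x ^ k := by
    rw [mul_sum, ← sum_sub_distrib]
    exact sum_congr rfl fun k _ => by ring
  refine mul_left_cancel₀ (sub_ne_zero.mpr hx) ?_
  rw [hsplit]
  linear_combination (n : R) * (x - 1) * h₁ - h₂

end ArithmeticGeometricSums

theorem sum_range_natCast_mul_sub (n : ℕ) :
    ∑ k ∈ range n, (k : ℝ) * (n - k) = n * (n ^ 2 - 1) / 6 := by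
  have h₁ : ∀ n : ℕ, ∑ k ∈ range n, (k : ℝ) = n * (n - 1) / 2 := fun n => by
    induction n with
    | zero => simp
    | succ n ih => rw [sum_range_succ, ih]; push_cast; ring
  have h₂ : ∀ n : ℕ, ∑ k ∈ range n, (k : ℝ) ^ 2 = n * (n - 1) * (2 * n - 1) / 6 := fun n => by
    induction n with
    | zero => simp
    | succ n ih => rw [sum_range_succ, ih]; push_cast; ring
  simp only [mul_sub, ← sq, sum_sub_distrib, ← sum_mul, h₁, h₂]
  ring

namespace Complex

theorem exp_two_mul_mul_I_sub_one_sq (z : ℂ) :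
    (exp (2 * z * I) - 1) ^ 2 = -4 * sin z ^ 2 * exp (2 * z * I) := by
  have hu : exp (z * I) ≠ 0 := exp_ne_zero _
  rw [sin, mul_assoc, two_mul, exp_add, neg_mul z I, exp_neg]
  field_simp
  linear_combination 4 * (1 - exp (z * I) ^ 2) ^ 2 * I_sq

theorem exp_two_mul_mul_I_pow_eq_one {z : ℂ} {n : ℕ} (h : sin (n * z) = 0) :
    exp (2 * z * I) ^ n = 1 := by
  have key := exp_two_mul_mul_I_sub_one_sq (n * z)
  rw [h] at key
  rw [← exp_nat_mul, show (n : ℂ) * (2 * z * I) = 2 * (n * z) * I by ring]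
  simpa [sub_eq_zero] using key

theorem exp_two_mul_mul_I_ne_one {z : ℂ} (h : sin z ≠ 0) : exp (2 * z * I) ≠ 1 := by
  intro h₁
  have key := exp_two_mul_mul_I_sub_one_sq z
  simp_all

theorem re_exp_two_mul_mul_I_pow (θ : ℝ) (k : ℕ) :
    (exp (2 * θ * I) ^ k).re = Real.cos (2 * k * θ) := by
  rw [← exp_nat_mul, ← exp_ofReal_mul_I_re (2 * k * θ)]
  push_cast
  ring_nf

end Complex

theorem sum_range_cos_two_mul_eq_zero {θ : ℝ} {n : ℕ} (hn : sin (n * θ) = 0) (hθ : sin θ ≠ 0) :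
    ∑ j ∈ range n, cos (2 * j * θ) = 0 := by
  set ζ := Complex.exp (2 * θ * Complex.I)
  have hζn : ζ ^ n = 1 := Complex.exp_two_mul_mul_I_pow_eq_one (by exact_mod_cast hn)
  have hζ : ζ ≠ 1 := Complex.exp_two_mul_mul_I_ne_one (by exact_mod_cast hθ)
  have hgeom : ∑ j ∈ range n, ζ ^ j = 0 := by
    rw [geom_sum_eq hζ, hζn, sub_self, zero_div]
  simpa [Complex.re_sum, ζ, Complex.re_exp_two_mul_mul_I_pow] using congrArg Complex.re hgeom

theorem sum_range_mul_sub_mul_cos_mul_sin_sq {θ : ℝ} {n : ℕ} (hn : sin (n * θ) = 0)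
    (hθ : sin θ ≠ 0) :
    (∑ k ∈ range n, (k : ℝ) * (n - k) * cos (2 * k * θ)) * sin θ ^ 2 = -n / 2 := by
  set ζ := Complex.exp (2 * θ * Complex.I)
  have hζn : ζ ^ n = 1 := Complex.exp_two_mul_mul_I_pow_eq_one (by exact_mod_cast hn)
  have hζ : ζ ≠ 1 := Complex.exp_two_mul_mul_I_ne_one (by exact_mod_cast hθ)
  have key := sub_one_sq_mul_sum_range_mul_sub_mul_pow_of_pow_eq_one hζn hζ
  rw [Complex.exp_two_mul_mul_I_sub_one_sq] at key
  have hsum : (∑ k ∈ range n, (k : ℂ) * (n - k) * ζ ^ k) * (sin θ : ℂ) ^ 2 = -n / 2 := by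
    refine mul_left_cancel₀ (Complex.exp_ne_zero (2 * θ * Complex.I)) ?_
    rw [Complex.ofReal_sin]
    linear_combination -key / 4
  rw [← Complex.ofReal_pow] at hsum
  have hre := congrArg Complex.re hsum
  rw [Complex.re_mul_ofReal, Complex.re_sum] at hre
  simpa [ζ, Complex.re_exp_two_mul_mul_I_pow] using hre

theorem sum_Icc_cos_two_mul_eq_neg_one {θ : ℝ} {n : ℕ} (hn₀ : n ≠ 0) (hn : sin (n * θ) = 0)
    (hθ : sin θ ≠ 0) :
    ∑ j ∈ Icc 1 (n - 1), cos (2 * j * θ) = -1 := by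
  have h := sum_range_cos_two_mul_eq_zero hn hθ
  rw [Nat.range_eq_Icc_zero_sub_one n hn₀, ← add_sum_Ioc_eq_sum_Icc (Nat.zero_le _),
    ← Icc_add_one_left_eq_Ioc, zero_add] at h
  simp only [CharP.cast_eq_zero, mul_zero, zero_mul, cos_zero] at h
  linarith

theorem sin_pi_mul_div_ne_zero {j m : ℕ} (hj : j ∈ Icc 1 (m - 1)) : sin (π * j / m) ≠ 0 := by
  obtain ⟨hj₁, hjm⟩ := mem_Icc.mp hj
  have hj₀ : (0 : ℝ) < j := by exact_mod_cast hj₁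
  have hjm : (j : ℝ) < m := by exact_mod_cast (show j < m by omega)
  refine (sin_pos_of_pos_of_lt_pi (div_pos (mul_pos pi_pos hj₀) (hj₀.trans hjm)) ?_).ne'
  rw [div_lt_iff₀ (hj₀.trans hjm)]
  exact mul_lt_mul_of_pos_left hjm pi_pos

theorem sin_natCast_mul_pi_mul_div {m : ℕ} (hm : m ≠ 0) (j : ℕ) : sin (m * (π * j / m)) = 0 := by
  rw [mul_div_cancel₀ _ (Nat.cast_ne_zero.mpr hm), mul_comm]
  exact sin_nat_mul_pi j

theorem sum_inv_sin_sq (m : ℕ) (hm : m ≠ 0) :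
    ∑ j ∈ Icc 1 (m - 1), (sin (π * j / m) ^ 2)⁻¹ = ((m : ℝ) ^ 2 - 1) / 3 := by
  have hexpand : ∀ j ∈ Icc 1 (m - 1), (sin (π * j / m) ^ 2)⁻¹
      = -(2 / m) * ∑ k ∈ range m, (k : ℝ) * (m - k) * cos (2 * k * (π * j / m)) := by
    intro j hj
    have h := sum_range_mul_sub_mul_cos_mul_sin_sq (sin_natCast_mul_pi_mul_div hm j)
      (sin_pi_mul_div_ne_zero hj)
    refine (eq_inv_of_mul_eq_one_left ?_).symm
    rw [mul_assoc, h]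
    field_simp
  have horth : ∀ k ∈ range m,
      (k : ℝ) * (m - k) * ∑ j ∈ Icc 1 (m - 1), cos (2 * k * (π * j / m)) = -(k * (m - k)) := by
    intro k hk
    have hsymm : ∑ j ∈ Icc 1 (m - 1), cos (2 * k * (π * j / m))
        = ∑ j ∈ Icc 1 (m - 1), cos (2 * j * (π * k / m)) :=
      sum_congr rfl fun j _ => by ring_nf
    rw [hsymm]
    rcases Nat.eq_zero_or_pos k with rfl | hk₀
    · simp
    · rw [sum_Icc_cos_two_mul_eq_neg_one hm (sin_natCast_mul_pi_mul_div hm k)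
        (sin_pi_mul_div_ne_zero (mem_Icc.mpr ⟨hk₀, Nat.le_sub_one_of_lt (mem_range.mp hk)⟩)), mul_neg_one]
  rw [sum_congr rfl hexpand, ← mul_sum, sum_comm]
  simp only [← mul_sum]
  rw [sum_congr rfl horth, sum_neg_distrib, sum_range_natCast_mul_sub]
  field_simp
  ring

/-- Lemma 3.4 (second identity): for every integer `m ≥ 2`,
`∑_{j=1}^{m-1} cos(2πj/m) / sin²(πj/m) = (m² − 6m + 5)/3`. -/
theorem sum_cos_csc_sq (m : ℕ) (hm : 2 ≤ m) :
    ∑ j ∈ Finset.Icc 1 (m - 1), Real.cos (2 * π * j / m) / (Real.sin (π * j / m)) ^ 2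
      = ((m : ℝ) ^ 2 - 6 * m + 5) / 3 := by
  have hcsc : ∀ j ∈ Icc 1 (m - 1),
      cos (2 * π * j / m) / sin (π * j / m) ^ 2 = (sin (π * j / m) ^ 2)⁻¹ - 2 := by
    intro j hj
    rw [mul_assoc, mul_div_assoc, cos_two_mul_eq_one_sub]
    field_simp [sin_pi_mul_div_ne_zero hj]
  rw [sum_congr rfl hcsc, sum_sub_distrib, sum_inv_sin_sq m (by omega), sum_const,
    Nat.card_Icc, nsmul_eq_mul, Nat.add_sub_cancel, Nat.cast_sub (by omega)]
  push_cast
  ring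
end

section
/- For every natural number m with m ≥ 2, the sum over j from 1 to m−1 of cos(2πj/m)/sin⁴(πj/m) equals (m⁴ − 20m² + 19)/45. -/
open Real Finset

/-!
With `ζ = exp (2 i x)` one has `cos 2x / sin⁴ x = 8 (ζ + ζ³) / (1 - ζ)⁴`. On the `m`-th roots of
unity `ζ ≠ 1` this is the discrete Fourier transform `∑_{a<m} c(a) ζ^a` of the quartic
`c(a) = 2a(m - a)(4 - a(m - a)) / (3m)`: four summations by parts against `ζ^a` leave only the
boundary terms, which add up to `8 (ζ + ζ³)`, because the fourth difference of `c` is constant.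
Summing over the nontrivial roots kills every frequency except `a = 0`, where `c` vanishes, so
the sum is `-∑_{a<m} c(a)`, which Faulhaber's formula evaluates.
-/

open scoped fwdDiff

section SummationByParts

variable {R : Type*} [CommRing R] {ζ : R} {n : ℕ}

theorem one_sub_mul_sum_range_mul_pow (hζ : ζ ^ n = 1) (f : ℕ → R) :
    (1 - ζ) * ∑ a ∈ range n, f a * ζ ^ a
      = ζ * ∑ a ∈ range n, Δ_[1] f a * ζ ^ a + (f 0 - f n) := by
  have shift := sum_range_succ' (fun a ↦ f a * ζ ^ a) n
  rw [sum_range_succ, hζ] at shift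
  have diff : ζ * ∑ a ∈ range n, Δ_[1] f a * ζ ^ a
      = ∑ a ∈ range n, f (a + 1) * ζ ^ (a + 1) - ζ * ∑ a ∈ range n, f a * ζ ^ a := by
    rw [mul_sum, mul_sum, ← sum_sub_distrib]
    exact sum_congr rfl fun a _ ↦ by rw [fwdDiff]; ring
  linear_combination shift - diff

theorem one_sub_pow_mul_sum_range_mul_pow (hζ : ζ ^ n = 1) (f : ℕ → R) (k : ℕ) :
    (1 - ζ) ^ k * ∑ a ∈ range n, f a * ζ ^ a
      = ζ ^ k * ∑ a ∈ range n, (Δ_[1])^[k] f a * ζ ^ a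
        + ∑ i ∈ range k,
            (1 - ζ) ^ (k - 1 - i) * ζ ^ i * ((Δ_[1])^[i] f 0 - (Δ_[1])^[i] f n) := by
  induction k with
  | zero => simp
  | succ k ih =>
    have boundary :
        ∑ i ∈ range k, (1 - ζ) ^ (k + 1 - 1 - i) * ζ ^ i * ((Δ_[1])^[i] f 0 - (Δ_[1])^[i] f n)
          = (1 - ζ) * ∑ i ∈ range k,
              (1 - ζ) ^ (k - 1 - i) * ζ ^ i * ((Δ_[1])^[i] f 0 - (Δ_[1])^[i] f n) := by
      rw [mul_sum]
      refine sum_congr rfl fun i hi ↦ ?_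
      rw [show k + 1 - 1 - i = k - 1 - i + 1 by grind, pow_succ]
      ring
    rw [pow_succ, mul_comm _ (1 - ζ), mul_assoc, ih, Function.iterate_succ_apply',
      sum_range_succ, boundary, Nat.add_sub_cancel, Nat.sub_self, pow_zero, one_mul]
    linear_combination ζ ^ k * one_sub_mul_sum_range_mul_pow hζ ((Δ_[1])^[k] f)

end SummationByParts

theorem Complex.cos_two_mul_div_sin_pow_four (x : ℂ) :
    cos (2 * x) / sin x ^ 4
      = 8 * (exp (2 * x * I) + exp (2 * x * I) ^ 3) / (1 - exp (2 * x * I)) ^ 4 := by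
  set w := exp (x * I)
  have hw : w ≠ 0 := exp_ne_zero _
  have hinv : w * w⁻¹ = 1 := mul_inv_cancel₀ hw
  have hζ : exp (2 * x * I) = w ^ 2 := by rw [← exp_nat_mul]; ring_nf
  have hcos : 2 * cos (2 * x) = w ^ 2 + (w ^ 2)⁻¹ := by rw [two_cos, neg_mul, exp_neg, hζ]
  have hsin : 2 * w * sin x = (1 - w ^ 2) * I := by
    have h := two_sin x
    rw [neg_mul, exp_neg] at h
    linear_combination w * h + I * hinv
  have hcos' : cos (2 * x) = (w ^ 4 + 1) / (2 * w ^ 2) := by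
    rw [eq_div_iff (by simp [hw])]
    linear_combination w ^ 2 * hcos + (w * w⁻¹ + 1) * hinv
  have hsin' : sin x ^ 4 = (1 - w ^ 2) ^ 4 / (16 * w ^ 4) := by
    rw [eq_div_iff (by simp [hw]), show sin x ^ 4 * (16 * w ^ 4) = (2 * w * sin x) ^ 4 by ring,
      hsin, mul_pow, I_pow_four, mul_one]
  rw [hζ, hcos', hsin', div_div_eq_mul_div]
  congr 1
  field_simp
  ring

theorem IsPrimitiveRoot.sum_Ico_one_sum_range_mul_pow {K : Type*} [CommRing K] [IsDomain K]
    {ω : K} {m : ℕ} (hω : IsPrimitiveRoot ω m) (c : ℕ → K) :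
    ∑ j ∈ Ico 1 m, ∑ a ∈ range m, c a * (ω ^ j) ^ a = m * c 0 - ∑ a ∈ range m, c a := by
  rcases m.eq_zero_or_pos with rfl | hm
  · simp
  have geom : ∀ a ∈ range m,
      ∑ j ∈ Ico 1 m, (ω ^ a) ^ j = (if a = 0 then (m : K) else 0) - 1 := by
    intro a ha
    rw [sum_Ico_eq_sub _ hm, sum_range_one, pow_zero]
    split_ifs with h
    · simp [h]
    · have hne : ω ^ a ≠ 1 := hω.pow_ne_one_of_pos_of_lt h (mem_range.mp ha)
      have hpow : (ω ^ a) ^ m = 1 := by rw [pow_right_comm, hω.pow_eq_one, one_pow]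
      have := geom_sum_mul (ω ^ a) m
      rw [hpow, sub_self] at this
      rw [(mul_eq_zero.mp this).resolve_right (sub_ne_zero.mpr hne)]
  calc ∑ j ∈ Ico 1 m, ∑ a ∈ range m, c a * (ω ^ j) ^ a
      = ∑ a ∈ range m, c a * ∑ j ∈ Ico 1 m, (ω ^ a) ^ j := by
        rw [sum_comm]
        simp only [mul_sum, pow_right_comm]
    _ = ∑ a ∈ range m, (c a * if a = 0 then (m : K) else 0) - ∑ a ∈ range m, c a := by
        rw [← sum_sub_distrib]
        exact sum_congr rfl fun a ha ↦ by rw [geom a ha]; ring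
    _ = m * c 0 - ∑ a ∈ range m, c a := by
        simp [mul_ite, hm, mul_comm]

noncomputable def cosCscCoeff (m a : ℕ) : ℂ := 2 * a * (m - a) * (4 - a * (m - a)) / (3 * m)

theorem fwdDiff_iter_four_cosCscCoeff (m : ℕ) :
    (Δ_[1])^[4] (cosCscCoeff m) = fun _ ↦ -16 / (m : ℂ) := by
  funext a
  simp only [Function.iterate_succ_apply', Function.iterate_zero_apply, fwdDiff, cosCscCoeff]
  push_cast
  ring

theorem one_sub_pow_four_mul_sum_cosCscCoeff {m : ℕ} (hm : m ≠ 0) {ζ : ℂ} (hζm : ζ ^ m = 1)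
    (hζ : ζ ≠ 1) :
    (1 - ζ) ^ 4 * ∑ a ∈ range m, cosCscCoeff m a * ζ ^ a = 8 * (ζ + ζ ^ 3) := by
  have hm' : (m : ℂ) ≠ 0 := Nat.cast_ne_zero.mpr hm
  have hgeom : ∑ a ∈ range m, ζ ^ a = 0 := by rw [geom_sum_eq hζ, hζm, sub_self, zero_div]
  rw [one_sub_pow_mul_sum_range_mul_pow hζm _ 4, fwdDiff_iter_four_cosCscCoeff, ← mul_sum, hgeom]
  simp only [sum_range_succ, sum_range_zero, Function.iterate_succ_apply',
    Function.iterate_zero_apply, fwdDiff, cosCscCoeff]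
  push_cast
  field_simp
  ring

theorem sum_range_mul_sub_mul_four_sub (m : ℕ) :
    ∑ a ∈ range m, (a : ℚ) * (m - a) * (4 - a * (m - a))
      = -m * ((m : ℚ) ^ 4 - 20 * m ^ 2 + 19) / 30 := by
  have expand : ∀ a : ℕ, (a : ℚ) * (m - a) * (4 - a * (m - a))
      = -a ^ 4 + 2 * m * a ^ 3 - (m ^ 2 + 4) * a ^ 2 + 4 * m * a ^ 1 := fun a ↦ by ring
  simp only [expand, sum_add_distrib, sum_sub_distrib, sum_neg_distrib, ← mul_sum, sum_range_pow,
    sum_range_succ, sum_range_zero, Nat.choose, bernoulli_zero, bernoulli_one, bernoulli_two,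
    bernoulli_eq_bernoulli'_of_ne_one (by decide : 3 ≠ 1), bernoulli'_three,
    bernoulli_eq_bernoulli'_of_ne_one (by decide : 4 ≠ 1), bernoulli'_four]
  push_cast
  ring

theorem sum_range_cosCscCoeff {m : ℕ} (hm : m ≠ 0) :
    ∑ a ∈ range m, cosCscCoeff m a = -((m : ℂ) ^ 4 - 20 * m ^ 2 + 19) / 45 := by
  have hm' : (m : ℂ) ≠ 0 := Nat.cast_ne_zero.mpr hm
  have h : ∑ a ∈ range m, (a : ℂ) * (m - a) * (4 - a * (m - a))
      = -m * ((m : ℂ) ^ 4 - 20 * m ^ 2 + 19) / 30 := by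
    exact_mod_cast congrArg (Rat.cast : ℚ → ℂ) (sum_range_mul_sub_mul_four_sub m)
  calc ∑ a ∈ range m, cosCscCoeff m a
      = 2 / (3 * m) * ∑ a ∈ range m, (a : ℂ) * (m - a) * (4 - a * (m - a)) := by
        rw [mul_sum]
        exact sum_congr rfl fun a _ ↦ by rw [cosCscCoeff]; ring
    _ = -((m : ℂ) ^ 4 - 20 * m ^ 2 + 19) / 45 := by
        rw [h]
        field_simp
        ring

/-- Equation (3.5): for every integer `m ≥ 2`,
`∑_{j=1}^{m-1} cos(2πj/m) / sin⁴(πj/m) = (m⁴ − 20m² + 19)/45`. -/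
theorem sum_cos_csc_pow_four (m : ℕ) (hm : 2 ≤ m) :
    ∑ j ∈ Finset.Icc 1 (m - 1), Real.cos (2 * π * j / m) / (Real.sin (π * j / m)) ^ 4
      = ((m : ℝ) ^ 4 - 20 * m ^ 2 + 19) / 45 := by
  have hm0 : m ≠ 0 := by omega
  set ω := Complex.exp (2 * π * Complex.I / m)
  have hω : IsPrimitiveRoot ω m := Complex.isPrimitiveRoot_exp m hm0
  have term : ∀ j ∈ Ico 1 m, ((Real.cos (2 * π * j / m) / Real.sin (π * j / m) ^ 4 : ℝ) : ℂ)
      = ∑ a ∈ range m, cosCscCoeff m a * (ω ^ j) ^ a := by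
    intro j hj
    obtain ⟨hj0, hjm⟩ := mem_Ico.mp hj
    have hne : ω ^ j ≠ 1 := hω.pow_ne_one_of_pos_of_lt (by omega) hjm
    have hpow : (ω ^ j) ^ m = 1 := by rw [pow_right_comm, hω.pow_eq_one, one_pow]
    have hexp : Complex.exp (2 * (π * j / m) * Complex.I) = ω ^ j := by
      rw [← Complex.exp_nat_mul]
      ring_nf
    push_cast
    rw [show 2 * (π : ℂ) * j / m = 2 * (π * j / m) by ring, Complex.cos_two_mul_div_sin_pow_four,
      hexp, ← one_sub_pow_four_mul_sum_cosCscCoeff hm0 hpow hne,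
      mul_div_cancel_left₀ _ (pow_ne_zero 4 (sub_ne_zero.mpr hne.symm))]
  apply Complex.ofReal_injective
  rw [Icc_sub_one_right_eq_Ico_of_not_isMin (by simpa using hm0), Complex.ofReal_sum,
    sum_congr rfl term, hω.sum_Ico_one_sum_range_mul_pow, sum_range_cosCscCoeff hm0,
    show cosCscCoeff m 0 = 0 by simp [cosCscCoeff]]
  push_cast
  ring
end

section
/- Let d be an even natural number and let k be an odd natural number with k ≤ d. Then K_{d/2}^d(k) = 0. -/
/-- The (binary) Krawtchouk polynomial value
`K_p^d(k) = ∑_{j=0}^{p} (-1)^j * C(k,j) * C(d-k, p-j)`,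
with the convention `C(m,n) = 0` when `n > m` (as for `Nat.choose`). -/
def krawtchouk (p d k : ℕ) : ℤ :=
  ∑ j ∈ Finset.range (p + 1), (-1) ^ j * (Nat.choose k j) * (Nat.choose (d - k) (p - j))

/-- For `d` even and `k` odd with `k ≤ d`, `K_{d/2}^d(k) = 0`. -/
theorem krawtchouk_half_odd (d k : ℕ) (hd : Even d) (hk : Odd k) (hkd : k ≤ d) :
    krawtchouk (d / 2) d k = 0 := by
  unfold krawtchouk
  set p := d / 2 with hp
  have hd2 : d = 2 * p := by
    obtain ⟨m, hm⟩ := hd; omega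
  refine Finset.sum_involution
    (fun j _ => if j ≤ k ∧ k ≤ j + p then k - j else j) ?_ ?_ ?_ ?_
  · intro j hj
    simp only [Finset.mem_range] at hj
    by_cases hc : j ≤ k ∧ k ≤ j + p
    · simp only [if_pos hc]
      obtain ⟨h1, h2⟩ := hc
      have hch1 : Nat.choose k (k - j) = Nat.choose k j := Nat.choose_symm h1
      have hch2 : Nat.choose (d - k) (p - (k - j)) = Nat.choose (d - k) (p - j) := by
        have he : p - (k - j) = (d - k) - (p - j) := by omega
        rw [he, Nat.choose_symm (by omega)]
      have hsign : (-1:ℤ) ^ (k - j) = -(-1:ℤ) ^ j := by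
        rcases Nat.even_or_odd j with he | ho
        · rw [he.neg_one_pow, (Nat.Odd.sub_even h1 hk he).neg_one_pow]
        · rw [ho.neg_one_pow, (Nat.Odd.sub_odd hk ho).neg_one_pow]; ring
      rw [hch1, hch2, hsign]; ring
    · simp only [if_neg hc]
      have hz : ((Nat.choose k j : ℤ)) * (Nat.choose (d - k) (p - j)) = 0 := by
        rcases not_and_or.mp hc with h | h
        · have : Nat.choose k j = 0 := Nat.choose_eq_zero_of_lt (by omega)
          simp [this]
        · have : Nat.choose (d - k) (p - j) = 0 :=
            Nat.choose_eq_zero_of_lt (by omega)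
          simp [this]
      have : (-1:ℤ) ^ j * (Nat.choose k j) * (Nat.choose (d - k) (p - j)) = 0 := by
        rw [mul_assoc, hz, mul_zero]
      rw [this]; ring
  · intro j hj hne
    by_cases hc : j ≤ k ∧ k ≤ j + p
    · simp only [if_pos hc]
      intro h
      have h2 := Nat.odd_iff.mp hk
      omega
    · simp only [if_neg hc]
      exfalso
      apply hne
      rcases not_and_or.mp hc with h | h
      · have : Nat.choose k j = 0 := Nat.choose_eq_zero_of_lt (by omega)
        simp [this]
      · simp only [Finset.mem_range] at hj
        have : Nat.choose (d - k) (p - j) = 0 :=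
          Nat.choose_eq_zero_of_lt (by omega)
        simp [this]
  · intro j hj
    simp only [Finset.mem_range] at hj ⊢
    by_cases hc : j ≤ k ∧ k ≤ j + p
    · simp only [if_pos hc]; omega
    · simp only [if_neg hc]; omega
  · intro j hj
    by_cases hc : j ≤ k ∧ k ≤ j + p
    · simp only [if_pos hc]
      have hc2 : k - j ≤ k ∧ k ≤ (k - j) + p := by
        simp only [Finset.mem_range] at hj; omega
      simp only [if_pos hc2]; omega
    · simp only [if_neg hc, if_neg hc]
end

section
/- Let d, k, p be natural numbers with k ≤ d and p ≤ d. Let γ be the linear endomorphism of ℝ^d (the space of functions Fin d → ℝ) sending the i-th standard basis vector e_i to −e_i when i < k and to e_i when i ≥ k. Then the trace of the induced linear endomorphism of the p-th exterior power ⋀^p(ℝ^d) equals the Krawtchouk value K_p^d(k). -/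
open Finset

section ExteriorPowerMap

variable {R : Type*} {M : Type*} [CommRing R] [AddCommGroup M] [Module R M]

theorem map_exteriorPower_le (f : M →ₗ[R] M) (p : ℕ) :
    Submodule.map (ExteriorAlgebra.map f).toLinearMap (⋀[R]^p M) ≤ ⋀[R]^p M := by
  have hbase : Submodule.map (ExteriorAlgebra.map f).toLinearMap
      (LinearMap.range (ExteriorAlgebra.ι R : M →ₗ[R] ExteriorAlgebra R M)) ≤
      LinearMap.range (ExteriorAlgebra.ι R : M →ₗ[R] ExteriorAlgebra R M) := by
    rintro x hx
    obtain ⟨y, ⟨m, rfl⟩, rfl⟩ := hx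
    exact ⟨f m, (ExteriorAlgebra.map_apply_ι f m).symm⟩
  induction p with
  | zero =>
    rw [show (⋀[R]^0 M) = (1 : Submodule R (ExteriorAlgebra R M)) from pow_zero _,
      Submodule.map_one]
  | succ n ih =>
    rw [show (⋀[R]^(n+1) M) = (⋀[R]^n M) *
        LinearMap.range (ExteriorAlgebra.ι R : M →ₗ[R] ExteriorAlgebra R M) from pow_succ _ _,
      Submodule.map_mul]
    exact mul_le_mul' ih hbase

/-- The endomorphism of the `p`-th exterior power `⋀[R]^p M` induced functorially by an
endomorphism `f` of `M` (determined by `f` on decomposable wedges). -/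
noncomputable def exteriorPowerMap (p : ℕ) (f : M →ₗ[R] M) : ⋀[R]^p M →ₗ[R] ⋀[R]^p M :=
  (ExteriorAlgebra.map f).toLinearMap.restrict
    (fun x hx => map_exteriorPower_le f p ⟨x, hx, rfl⟩)

end ExteriorPowerMap

/-!
In the basis `e_s = ⋀_{i ∈ s} e_i` of `⋀^p ℝ^d` induced by the standard basis, `γ` acts
diagonally with eigenvalue `∏_{i ∈ s} ε_i`, where `ε_i = ±1` is the eigenvalue of `e_i`. Hence
the trace is the elementary symmetric sum `∑_{|s| = p} ∏_{i ∈ s} ε_i`, which is the coefficient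
of `t^p` in `∏_i (1 + ε_i t) = (1 - t)^k (1 + t)^(d - k)`; expanding this product gives `K_p^d(k)`.
-/

open Polynomial

theorem exteriorPowerMap_eq_exteriorPower_map {R M : Type*} [CommRing R] [AddCommGroup M]
    [Module R M] (p : ℕ) (f : M →ₗ[R] M) : exteriorPowerMap p f = exteriorPower.map p f := by
  ext v
  rw [LinearMap.compAlternatingMap_apply, LinearMap.compAlternatingMap_apply,
    exteriorPower.map_apply_ιMulti, exteriorPower.ιMulti_apply_coe]
  exact ExteriorAlgebra.map_apply_ιMulti f v

namespace exteriorPower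

variable {R M I : Type*} [CommRing R] [AddCommGroup M] [Module R M] [LinearOrder I]
  (b : Module.Basis I R M) (c : I → R) {f : M →ₗ[R] M}

theorem map_apply_basis_of_apply_basis_eq_smul (hf : ∀ i, f (b i) = c i • b i) (p : ℕ)
    (s : Set.powersetCard I p) :
    map p f (b.exteriorPower p s) = (∏ i ∈ s.val, c i) • b.exteriorPower p s := by
  set e := Set.powersetCard.ofFinEmbEquiv.symm s
  have hprod : ∏ i ∈ s.val, c i = ∏ j, c (e j) := by
    rw [← s.val.map_orderEmbOfFin_univ s.prop, prod_map]
    rfl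
  rw [basis_apply, map_apply_ιMulti_family, hprod, ιMulti_family, ιMulti_family,
    ← AlternatingMap.map_smul_univ]
  congr 1
  funext j
  exact hf (e j)

theorem trace_map_of_apply_basis_eq_smul [Fintype I] (hf : ∀ i, f (b i) = c i • b i) (p : ℕ) :
    LinearMap.trace R _ (map p f) = ∑ s ∈ univ.powersetCard p, ∏ i ∈ s, c i := by
  have hdiag s :
      (b.exteriorPower p).repr (map p f (b.exteriorPower p s)) s = ∏ i ∈ s.val, c i := by
    rw [map_apply_basis_of_apply_basis_eq_smul b c hf, map_smul, Module.Basis.repr_self,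
      Finsupp.smul_single_one, Finsupp.single_eq_same]
  rw [LinearMap.trace_eq_matrix_trace R (b.exteriorPower p), Matrix.trace]
  simp only [Matrix.diag_apply, LinearMap.toMatrix_apply, hdiag]
  refine (sum_subtype _ (fun t ↦ ?_) (fun t ↦ ∏ i ∈ t, c i)).symm
  rw [mem_powersetCard, Set.powersetCard.mem_iff]
  exact and_iff_right (subset_univ t)

end exteriorPower

section Polynomial

variable {R ι : Type*} [CommRing R]

theorem Finset.prod_one_add_C_mul_X_coeff (s : Finset ι) (c : ι → R) (p : ℕ) :
    (∏ i ∈ s, (1 + C (c i) * X)).coeff p = ∑ t ∈ s.powersetCard p, ∏ i ∈ t, c i := by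
  simp_rw [prod_one_add, prod_mul_distrib, ← map_prod, prod_const, finsetSum_coeff,
    coeff_C_mul_X_pow]
  rw [powersetCard_eq_filter, sum_filter]
  simp_rw [eq_comm]

theorem coeff_one_add_C_mul_X_pow (a : R) (n j : ℕ) :
    ((1 + C a * X) ^ n).coeff j = a ^ j * n.choose j := by
  have h := (range n).prod_one_add_C_mul_X_coeff (fun _ ↦ a) j
  rw [prod_const, card_range] at h
  rw [h, sum_congr rfl fun t ht ↦ by rw [prod_const, (mem_powersetCard.mp ht).2], sum_const,
    card_powersetCard, card_range, nsmul_eq_mul, mul_comm]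

variable (R) in
theorem krawtchouk_eq_coeff (p d k : ℕ) :
    (krawtchouk p d k : R) = ((1 - X : R[X]) ^ k * (1 + X) ^ (d - k)).coeff p := by
  rw [show (1 - X : R[X]) = 1 + C (-1) * X by simp [sub_eq_add_neg], coeff_mul,
    Nat.sum_antidiagonal_eq_sum_range_succ_mk, krawtchouk]
  push_cast
  refine sum_congr rfl fun j _ ↦ ?_
  rw [coeff_one_add_C_mul_X_pow, coeff_one_add_X_pow, mul_assoc]

theorem prod_one_add_C_ite_mul_X {d k : ℕ} (hkd : k ≤ d) :
    ∏ i : Fin d, (1 + C (if (i : ℕ) < k then -1 else 1 : R) * X) =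
      (1 - X) ^ k * (1 + X) ^ (d - k) := by
  have hk : #{i : Fin d | (i : ℕ) < k} = k := by rw [Fin.card_filter_val_lt, min_eq_right hkd]
  have hdk : #{i : Fin d | ¬ (i : ℕ) < k} = d - k := by
    rw [filter_not, card_sdiff_of_subset (filter_subset _ _), hk, card_univ, Fintype.card_fin]
  simp_rw [apply_ite C, apply_ite (fun a ↦ 1 + a * X), prod_ite, prod_const, hk, hdk]
  simp [sub_eq_add_neg]

end Polynomial

theorem trace_exteriorPowerMap_eq_krawtchouk_general (d k p : ℕ) (hkd : k ≤ d)
    (γ : (Fin d → ℝ) →ₗ[ℝ] (Fin d → ℝ))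
    (hγ : ∀ i : Fin d, γ (Pi.single i 1) =
      if (i : ℕ) < k then -Pi.single i 1 else Pi.single i 1) :
    LinearMap.trace ℝ _ (exteriorPowerMap p γ) = (krawtchouk p d k : ℝ) := by
  set ε : Fin d → ℝ := fun i ↦ if (i : ℕ) < k then -1 else 1
  have hγε i : γ (Pi.basisFun ℝ (Fin d) i) = ε i • Pi.basisFun ℝ (Fin d) i := by
    rw [Pi.basisFun_apply, hγ]
    split_ifs <;> simp [ε, *]
  rw [exteriorPowerMap_eq_exteriorPower_map,
    exteriorPower.trace_map_of_apply_basis_eq_smul _ ε hγε, ← prod_one_add_C_mul_X_coeff,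
    prod_one_add_C_ite_mul_X hkd, ← krawtchouk_eq_coeff]

/-- Equation (4.2) of the paper: let `γ` be the linear endomorphism of `ℝ^d` sending the
`i`-th standard basis vector `e_i` to `-e_i` for `i < k` and to `e_i` for `i ≥ k`.  Then the
trace of the induced endomorphism of the `p`-th exterior power `⋀^p(ℝ^d)` is the Krawtchouk
value `K_p^d(k)`. -/
theorem trace_exteriorPowerMap_eq_krawtchouk (d k p : ℕ) (hkd : k ≤ d) (hpd : p ≤ d)
    (γ : (Fin d → ℝ) →ₗ[ℝ] (Fin d → ℝ))
    (hγ : ∀ i : Fin d, γ (Pi.single i 1) =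
      if (i : ℕ) < k then -Pi.single i 1 else Pi.single i 1) :
    LinearMap.trace ℝ _ (exteriorPowerMap p γ) = (krawtchouk p d k : ℝ) :=
  trace_exteriorPowerMap_eq_krawtchouk_general d k p hkd γ hγ
end

section
/- Let d, r, s be natural numbers with k := 2s + r ≤ d, and let θ : Fin s → ℝ satisfy 0 < θ_j < π for all j. Let A be the k×k real block-diagonal matrix with r diagonal entries equal to −1 followed by s two-by-two rotation blocks R(θ_j) = [[cos θ_j, −sin θ_j],[sin θ_j, cos θ_j]], and let γ be the d×d block-diagonal matrix diag(I_{d−k}, A). Then det(I_k − A) = 2^k · ∏_{j=1}^s sin²(θ_j/2), which is strictly positive, and trace(γ)/det(I_k − A) = (d − k − r + ∑_{j=1}^s 2 cos θ_j) · 2^{−k} · ∏_{j=1}^s (1/sin²(θ_j/2)). -/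
open Real Matrix Finset

/-- The block-diagonal matrix consisting of `s` two-by-two rotation blocks
`R(θ_j) = [[cos θ_j, -sin θ_j], [sin θ_j, cos θ_j]]`. -/
noncomputable def rotationBlocks (s : ℕ) (θ : Fin s → ℝ) :
    Matrix (Fin s × Fin 2) (Fin s × Fin 2) ℝ :=
  fun p q => if p.1 = q.1 then
    (Matrix.of ![![Real.cos (θ p.1), -Real.sin (θ p.1)],
                 ![Real.sin (θ p.1), Real.cos (θ p.1)]]) p.2 q.2
  else 0

/-- The `k × k` block-diagonal matrix (`k = r + 2s`) with `r` diagonal entries equal to `-1`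
followed by `s` rotation blocks `R(θ_j)`. -/
noncomputable def eigMatrixA (r s : ℕ) (θ : Fin s → ℝ) :
    Matrix (Fin r ⊕ Fin s × Fin 2) (Fin r ⊕ Fin s × Fin 2) ℝ :=
  Matrix.fromBlocks (-1) 0 0 (rotationBlocks s θ)

/-- The `d × d` block-diagonal matrix `γ = diag(I_{d-k}, A)` of eigenvalue type
`E(θ_1, …, θ_s; r)`, where `k = 2s + r ≤ d`. -/
noncomputable def eigMatrixGamma (d r s : ℕ) (θ : Fin s → ℝ) :
    Matrix (Fin (d - (2 * s + r)) ⊕ (Fin r ⊕ Fin s × Fin 2))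
      (Fin (d - (2 * s + r)) ⊕ (Fin r ⊕ Fin s × Fin 2)) ℝ :=
  Matrix.fromBlocks 1 0 0 (eigMatrixA r s θ)

lemma det_one_sub_rot (x : ℝ) :
    ((1 : Matrix (Fin 2) (Fin 2) ℝ) -
      Matrix.of ![![Real.cos x, -Real.sin x], ![Real.sin x, Real.cos x]]).det
      = 4 * Real.sin (x / 2) ^ 2 := by
  rw [Matrix.det_fin_two]
  have h2x : 2 * (x / 2) = x := by ring
  have hc := Real.cos_sq (x / 2)
  rw [h2x] at hc
  have hp := Real.sin_sq_add_cos_sq (x / 2)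
  have hp2 := Real.sin_sq_add_cos_sq x
  simp [Matrix.one_apply, Matrix.sub_apply]
  nlinarith [hc, hp, hp2]

lemma det_one_sub_rotationBlocks (s : ℕ) (θ : Fin s → ℝ) :
    ((1 : Matrix (Fin s × Fin 2) (Fin s × Fin 2) ℝ) - rotationBlocks s θ).det
      = ∏ j, (4 * Real.sin (θ j / 2) ^ 2) := by
  have hrot : (1 : Matrix (Fin s × Fin 2) (Fin s × Fin 2) ℝ) - rotationBlocks s θ =
      (Matrix.blockDiagonal fun j => (1 : Matrix (Fin 2) (Fin 2) ℝ) -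
        Matrix.of ![![Real.cos (θ j), -Real.sin (θ j)],
                    ![Real.sin (θ j), Real.cos (θ j)]]).submatrix
        (Equiv.prodComm (Fin s) (Fin 2)) (Equiv.prodComm (Fin s) (Fin 2)) := by
    ext ⟨i, a⟩ ⟨j, b⟩
    by_cases h : i = j <;>
      simp [h, rotationBlocks, Matrix.blockDiagonal_apply, Matrix.one_apply, Prod.ext_iff,
        Matrix.sub_apply]
  rw [hrot, Matrix.det_submatrix_equiv_self, Matrix.det_blockDiagonal]
  exact Finset.prod_congr rfl fun j _ => det_one_sub_rot (θ j)

lemma trace_fromBlocks' {m n : Type*} [Fintype m] [Fintype n] [DecidableEq m] [DecidableEq n]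
    (A : Matrix m m ℝ) (B : Matrix m n ℝ) (C : Matrix n m ℝ) (D : Matrix n n ℝ) :
    Matrix.trace (Matrix.fromBlocks A B C D) = Matrix.trace A + Matrix.trace D := by
  simp [Matrix.trace, Fintype.sum_sum_type, Matrix.diag, Matrix.fromBlocks]

lemma det_one_sub_eigMatrixA (r s : ℕ) (θ : Fin s → ℝ) :
    Matrix.det (1 - eigMatrixA r s θ)
      = 2 ^ (2 * s + r) * ∏ j, Real.sin (θ j / 2) ^ 2 := by
  have hsplit : (1 : Matrix (Fin r ⊕ Fin s × Fin 2) (Fin r ⊕ Fin s × Fin 2) ℝ)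
      - eigMatrixA r s θ
      = Matrix.fromBlocks ((1 : Matrix (Fin r) (Fin r) ℝ) - (-1)) 0 0
          ((1 : Matrix (Fin s × Fin 2) (Fin s × Fin 2) ℝ) - rotationBlocks s θ) := by
    rw [eigMatrixA, ← Matrix.fromBlocks_one]
    ext (i | i) (j | j) <;> simp [Matrix.fromBlocks, Matrix.sub_apply]
  rw [hsplit, Matrix.det_fromBlocks_zero₂₁]
  have h1 : (1 : Matrix (Fin r) (Fin r) ℝ) - (-1) = (2 : ℝ) • 1 := by
    rw [sub_neg_eq_add, two_smul]
  rw [h1, Matrix.det_smul, Matrix.det_one, Fintype.card_fin, mul_one,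
    det_one_sub_rotationBlocks, Finset.prod_mul_distrib, Finset.prod_const, Finset.card_univ,
    Fintype.card_fin]
  have : (4 : ℝ) ^ s = 2 ^ (2 * s) := by
    rw [pow_mul]; norm_num
  rw [this, ← mul_assoc, ← pow_add, add_comm r (2 * s)]

/-- Proposition 3.1 (linear-algebraic content): for `γ` of eigenvalue type
`E(θ_1, …, θ_s; r)` with `k = 2s + r ≤ d` and `0 < θ_j < π`, one has
`det(I_k − A) = 2^k ∏_j sin²(θ_j/2) > 0` and
`tr(γ)/det(I_k − A) = (d − k − r + ∑_j 2cos θ_j) · 2^{−k} · ∏_j csc²(θ_j/2)`. -/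
theorem det_trace_eigMatrix (d r s : ℕ) (hk : 2 * s + r ≤ d) (θ : Fin s → ℝ)
    (hθ : ∀ j, 0 < θ j ∧ θ j < π) :
    Matrix.det (1 - eigMatrixA r s θ)
        = 2 ^ (2 * s + r) * ∏ j, Real.sin (θ j / 2) ^ 2
      ∧ (0 : ℝ) < 2 ^ (2 * s + r) * ∏ j, Real.sin (θ j / 2) ^ 2
      ∧ Matrix.trace (eigMatrixGamma d r s θ) / Matrix.det (1 - eigMatrixA r s θ)
        = ((d : ℝ) - (2 * s + r) - r + ∑ j, 2 * Real.cos (θ j))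
            * (((2 : ℝ) ^ (2 * s + r))⁻¹ * ∏ j, (1 / Real.sin (θ j / 2) ^ 2)) := by
  have hdet := det_one_sub_eigMatrixA r s θ
  have hsin : ∀ j, 0 < Real.sin (θ j / 2) ^ 2 := by
    intro j
    have h1 := (hθ j).1
    have h2 := (hθ j).2
    have : 0 < Real.sin (θ j / 2) := by
      apply Real.sin_pos_of_pos_of_lt_pi <;> [linarith; linarith [Real.pi_pos]]
    positivity
  have hprod : 0 < ∏ j, Real.sin (θ j / 2) ^ 2 :=
    Finset.prod_pos fun j _ => hsin j
  have hpos : (0 : ℝ) < 2 ^ (2 * s + r) * ∏ j, Real.sin (θ j / 2) ^ 2 := by positivity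
  refine ⟨hdet, hpos, ?_⟩
  have htr : Matrix.trace (eigMatrixGamma d r s θ)
      = ((d : ℝ) - (2 * s + r) - r + ∑ j, 2 * Real.cos (θ j)) := by
    rw [eigMatrixGamma, trace_fromBlocks', eigMatrixA, trace_fromBlocks']
    have h1 : Matrix.trace (1 : Matrix (Fin (d - (2 * s + r))) (Fin (d - (2 * s + r))) ℝ)
        = (d : ℝ) - (2 * s + r) := by
      rw [Matrix.trace_one, Fintype.card_fin, Nat.cast_sub hk]
      push_cast; ring
    have h2 : Matrix.trace (-1 : Matrix (Fin r) (Fin r) ℝ) = -(r : ℝ) := by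
      rw [Matrix.trace_neg, Matrix.trace_one, Fintype.card_fin]
    have h3 : Matrix.trace (rotationBlocks s θ) = ∑ j, 2 * Real.cos (θ j) := by
      rw [Matrix.trace]
      rw [Fintype.sum_prod_type]
      refine Finset.sum_congr rfl fun j _ => ?_
      simp [rotationBlocks, Matrix.diag, Fin.sum_univ_two]
      ring
    rw [h1, h2, h3]; ring
  rw [htr, hdet, div_eq_mul_inv, mul_inv]
  congr 1
  congr 1
  rw [← Finset.prod_inv_distrib]
  exact Finset.prod_congr rfl fun j _ => (one_div _).symm
end
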